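/- Let d ≥ 1 and let Q be the ground state. For ε : ℝ^d → ℂ define F(ε) := |Q + ε|^{2(d+2)/d} - Q^{2(d+2)/d} - ((d+2)/d) Q^{4/d} (Im ε)² - (2(d+2)/d) Q^{1+4/d} Re ε - ((d+2)/d)((d+4)/d) Q^{4/d} (Re ε)². Then there exists a constant B₁ > 0 depending only on d such that: (i) if d ≥ 4, ∫_{ℝ^d} |F(ε)(y)| dy ≤ B₁ ‖ε‖_{L^{2(d+2)/d}}^{2(d+2)/d}; and (ii) if 1 ≤ d ≤ 3, ∫_{ℝ^d} |F(ε)(y)| dy ≤ B₁ (‖ε‖_{L^{2(d+2)/d}}^{2(d+2)/d} + ‖ε‖_{L³}³). -/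

import Mathlib

open MeasureTheory Filter
open scoped ENNReal NNReal Topology FourierTransform

noncomputable section

abbrev Ed (d : ℕ) : Type := EuclideanSpace ℝ (Fin d)

/-- `|∇u(x)|² = ∑ᵢ |∂ᵢu(x)|²`. -/
def gradSq {d : ℕ} (u : Ed d → ℂ) (x : Ed d) : ℝ :=
  ∑ i : Fin d, ‖fderiv ℝ u x (EuclideanSpace.single i (1:ℝ))‖ ^ 2

def gradNorm {d : ℕ} (u : Ed d → ℂ) (x : Ed d) : ℝ := Real.sqrt (gradSq u x)

/-- Mass `M(u) = ∫ |u|²`. -/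
def massI {d : ℕ} (u : Ed d → ℂ) : ℝ := ∫ x, ‖u x‖ ^ 2

def kineticI {d : ℕ} (u : Ed d → ℂ) : ℝ := ∫ x, gradSq u x

def gradL2 {d : ℕ} (u : Ed d → ℂ) : ℝ := Real.sqrt (kineticI u)

def L2R {d : ℕ} (u : Ed d → ℂ) : ℝ := Real.sqrt (massI u)

def H1R {d : ℕ} (u : Ed d → ℂ) : ℝ := L2R u + gradL2 u

/-- Energy `E(u) = ½∫|∇u|² - (d/(2(d+2)))∫|u|^{2(d+2)/d}`. -/
def energyI (d : ℕ) (u : Ed d → ℂ) : ℝ :=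
  (1/2) * kineticI u -
    ((d : ℝ) / (2 * ((d : ℝ) + 2))) * ∫ x, ‖u x‖ ^ ((2 * ((d : ℝ) + 2)) / (d : ℝ))

def InH1 {d : ℕ} (u : Ed d → ℂ) : Prop :=
  MemLp u 2 volume ∧ Differentiable ℝ u ∧ MemLp (gradNorm u) 2 volume

def lapR {d : ℕ} (f : Ed d → ℝ) (x : Ed d) : ℝ :=
  ∑ i : Fin d,
    fderiv ℝ (fun y => fderiv ℝ f y (EuclideanSpace.single i (1:ℝ))) x (EuclideanSpace.single i (1:ℝ))

/-- The ground state: positive, spherically symmetric, Schwartz solution of `ΔQ - Q + |Q|^{4/d}Q = 0`. -/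
structure IsGroundState (d : ℕ) (Q : Ed d → ℝ) : Prop where
  schwartz : ∃ S : SchwartzMap (Ed d) ℝ, ∀ x, Q x = S x
  pos : ∀ x, 0 < Q x
  radial : ∀ x y : Ed d, ‖x‖ = ‖y‖ → Q x = Q y
  eqn : ∀ x, lapR Q x - Q x + |Q x| ^ ((4:ℝ)/(d:ℝ)) * Q x = 0

/-- A fixed smooth radial bump function, supported in `{|x| ≤ 25/24}` and `1` on `{|x| ≤ 1}`. -/
structure IsRadialBump (d : ℕ) (φ : Ed d → ℝ) : Prop where
  smooth : ContDiff ℝ (⊤ : ℕ∞) φ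
  radial : ∀ x y : Ed d, ‖x‖ = ‖y‖ → φ x = φ y
  supp : ∀ x : Ed d, (25:ℝ)/24 < ‖x‖ → φ x = 0
  one : ∀ x : Ed d, ‖x‖ ≤ 1 → φ x = 1

def cutLE {d : ℕ} (φ : Ed d → ℝ) (C : ℝ) (x : Ed d) : ℝ := φ (C⁻¹ • x)

def cutGT {d : ℕ} (φ : Ed d → ℝ) (C : ℝ) (x : Ed d) : ℝ := 1 - φ (C⁻¹ • x)

/-- Convolution kernel of the Littlewood–Paley projection `P_{≤N}`. -/
def kerLE {d : ℕ} (φ : Ed d → ℝ) (N : ℝ) : Ed d → ℂ :=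
  𝓕⁻ (fun ξ : Ed d => ((φ (N⁻¹ • ξ) : ℝ) : ℂ))

/-- Convolution kernel of the Littlewood–Paley projection `P_N`. -/
def kerPN {d : ℕ} (φ : Ed d → ℝ) (N : ℝ) : Ed d → ℂ :=
  𝓕⁻ (fun ξ : Ed d => (((φ (N⁻¹ • ξ) - φ ((2/N) • ξ)) : ℝ) : ℂ))

def PLE {d : ℕ} (φ : Ed d → ℝ) (N : ℝ) (f : Ed d → ℂ) (x : Ed d) : ℂ :=
  ∫ y, kerLE φ N (x - y) * f y

def PN {d : ℕ} (φ : Ed d → ℝ) (N : ℝ) (f : Ed d → ℂ) (x : Ed d) : ℂ :=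
  ∫ y, kerPN φ N (x - y) * f y

def PNtilde {d : ℕ} (φ : Ed d → ℝ) (N : ℝ) (f : Ed d → ℂ) (x : Ed d) : ℂ :=
  PN φ (N/2) f x + PN φ N f x + PN φ (2*N) f x

def PGT {d : ℕ} (φ : Ed d → ℝ) (N : ℝ) (f : Ed d → ℂ) (x : Ed d) : ℂ :=
  f x - PLE φ N f x

/-- The free Schrödinger propagator `e^{itΔ}`. -/
def freeProp (d : ℕ) (t : ℝ) (f : Ed d → ℂ) (x : Ed d) : ℂ :=
  if t = 0 then f x
  else (4 * (Real.pi : ℂ) * Complex.I * (t : ℂ)) ^ (-(d:ℂ)/2) *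
    ∫ y, Complex.exp (Complex.I * ((‖x - y‖ : ℝ) : ℂ) ^ 2 / (4 * (t : ℂ))) * f y

/-- The focusing mass-critical nonlinearity `|u|^{4/d}u`. -/
def nlin (d : ℕ) (v : Ed d → ℂ) (x : Ed d) : ℂ :=
  ((‖v x‖ ^ ((4:ℝ)/(d:ℝ)) : ℝ) : ℂ) * v x

/-- Spacetime norm `‖u‖_{L_{t,x}^q(S×ℝ^d)}`. -/
def STnorm (d : ℕ) (q : ℝ) (S : Set ℝ) (u : ℝ → Ed d → ℂ) : ℝ≥0∞ :=
  (∫⁻ t in S, ∫⁻ x, (‖u t x‖₊ : ℝ≥0∞) ^ q) ^ (1/q)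

/-- Strong `L²` solution of the focusing mass-critical NLS on the interval `I`. -/
structure IsSolution (d : ℕ) (I : Set ℝ) (u : ℝ → Ed d → ℂ) : Prop where
  ordConn : I.OrdConnected
  memL2 : ∀ t ∈ I, MemLp (u t) 2 volume
  contL2 : ∀ t₀ ∈ I,
    Tendsto (fun t => eLpNorm (fun x => u t x - u t₀ x) 2 volume) (nhdsWithin t₀ I) (nhds 0)
  stFinite : ∀ K : Set ℝ, K ⊆ I → IsCompact K → STnorm d (2*((d:ℝ)+2)/(d:ℝ)) K u < ⊤
  duhamel : ∀ t₀ ∈ I, ∀ t₁ ∈ I, ∀ᵐ x : Ed d ∂volume,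
    u t₁ x = freeProp d (t₁ - t₀) (u t₀) x +
      Complex.I * ∫ s in t₀..t₁, freeProp d (t₁ - s) (nlin d (u s)) x

def IsMaximalSolution (d : ℕ) (I : Set ℝ) (u : ℝ → Ed d → ℂ) : Prop :=
  IsSolution d I u ∧
  ∀ (J : Set ℝ) (v : ℝ → Ed d → ℂ), I ⊆ J → IsSolution d J v → (∀ t ∈ I, v t = u t) → J = I

/-- Forward-in-time Duhamel formula (weak `L²` limit, linear part vanishing). -/
def ForwardDuhamel (d : ℕ) (u : ℝ → Ed d → ℂ) : Prop :=
  ∀ t : ℝ, 0 ≤ t → ∀ g : Ed d → ℂ, MemLp g 2 volume →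
    Tendsto (fun T : ℝ => ∫ x, (starRingEnd ℂ) (g x) *
        (-(Complex.I * ∫ s in t..T, freeProp d (t - s) (nlin d (u s)) x)))
      atTop (nhds (∫ x, (starRingEnd ℂ) (g x) * u t x))

def SphSymm {d : ℕ} (f : Ed d → ℂ) : Prop :=
  ∀ x y : Ed d, ‖x‖ = ‖y‖ → f x = f y

def headSq {d : ℕ} (d₁ : ℕ) (x : Ed d) : ℝ :=
  ∑ i : Fin d, if (i : ℕ) < d₁ then x i ^ 2 else 0

def tailSq {d : ℕ} (d₁ : ℕ) (x : Ed d) : ℝ :=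
  ∑ i : Fin d, if (i : ℕ) < d₁ then 0 else x i ^ 2

def headNorm {d : ℕ} (d₁ : ℕ) (x : Ed d) : ℝ := Real.sqrt (headSq d₁ x)

def tailNorm {d : ℕ} (d₁ : ℕ) (x : Ed d) : ℝ := Real.sqrt (tailSq d₁ x)

/-- Spherical symmetry in each of the two factors of `ℝ^d = ℝ^{d₁} × ℝ^{d-d₁}`. -/
def SplitSph (d d₁ : ℕ) (f : Ed d → ℂ) : Prop :=
  ∀ x y : Ed d, headSq d₁ x = headSq d₁ y → tailSq d₁ x = tailSq d₁ y → f x = f y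

/-- Spherical symmetry in the first `d₁` variables only. -/
def HeadSpherical (d d₁ : ℕ) (f : Ed d → ℂ) : Prop :=
  ∀ x y : Ed d, headSq d₁ x = headSq d₁ y → (∀ i : Fin d, d₁ ≤ (i:ℕ) → x i = y i) → f x = f y

/-- General splitting-spherical symmetry (after relabelling the coordinates). -/
def SplittingSpherical {d : ℕ} (f : Ed d → ℂ) : Prop :=
  ∃ (k : ℕ) (σ : Fin d → Fin k),
    (∀ b : Fin k, 2 ≤ (Finset.univ.filter (fun j => σ j = b)).card) ∧
    ∀ x y : Ed d,
      (∀ b : Fin k, (∑ j ∈ Finset.univ.filter (fun j => σ j = b), x j ^ 2) =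
        ∑ j ∈ Finset.univ.filter (fun j => σ j = b), y j ^ 2) → f x = f y

/-- Admissible symmetry; `D` is the "sufficiently large dimension" threshold for the
splitting `d/3 < d₁ ≤ d/2`. -/
def AdmissibleSymmetry (D : ℕ) (d : ℕ) (f : Ed d → ℂ) : Prop :=
  (d = 1 ∧ ∀ x, f (-x) = f x) ∨
  ((d = 2 ∨ d = 3) ∧ SphSymm f) ∨
  (4 ≤ d ∧ ∃ d₁ : ℕ, (d₁ = d / 2 ∨ (D ≤ d ∧ d < 3 * d₁ ∧ 2 * d₁ ≤ d)) ∧ SplitSph d d₁ f)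

/-- Mixed spacetime norm `L_t^q L_x^r (I × ℝ^d)` of a real-valued `F`. -/
def mixedNorm (d : ℕ) (q : ℝ≥0∞) (r : ℝ≥0∞) (I : Set ℝ) (F : ℝ → Ed d → ℝ) : ℝ≥0∞ :=
  if q = ⊤ then essSup (fun t => eLpNorm (F t) r volume) (volume.restrict I)
  else (∫⁻ t in I, (eLpNorm (F t) r volume) ^ q.toReal) ^ (1 / q.toReal)

def projHead {d : ℕ} (d₁ : ℕ) (x : Ed d) : Ed d :=
  (EuclideanSpace.equiv (Fin d) ℝ).symm (fun i => if (i : ℕ) < d₁ then x i else 0)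

/-- Bessel function `J₀`. -/
def J0 (r : ℝ) : ℝ := (1 / (2 * Real.pi)) * ∫ θ in (0:ℝ)..(2 * Real.pi), Real.cos (r * Real.sin θ)

/-- Bessel function `Y₀`, via `Y₀(r) = -(2/π)∫₀^∞ cos(r cosh s) ds` (improper integral). -/
def Y0 (r : ℝ) : ℝ :=
  limUnder Filter.atTop
    (fun T : ℝ => -(2 / Real.pi) * ∫ s in (0:ℝ)..T, Real.cos (r * Real.cosh s))

/-- Hankel function `H₀⁽¹⁾ = J₀ + iY₀`. -/
def H0c (r : ℝ) : ℂ := (J0 r : ℂ) + Complex.I * (Y0 r : ℂ)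

/-- Japanese bracket `⟨r⟩ = (1+r²)^{1/2}`. -/
def jbr (r : ℝ) : ℝ := Real.sqrt (1 + r ^ 2)

/-- Integral kernel of `P_N⁺ e^{-itΔ}` in dimension `2`:
`(1/2)(2π)^{-2} ∫_{ℝ²} H₀⁽¹⁾(|ξ||x|) e^{it|ξ|²} J₀(|ξ||y|) ψ(ξ/N) dξ`. -/
def hankelKernel (φ : Ed 2 → ℝ) (N t : ℝ) (x y : Ed 2) : ℂ :=
  (1/2 : ℂ) * ((((2 * Real.pi) ^ 2 : ℝ)⁻¹ : ℝ) : ℂ) *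
    ∫ ξ : Ed 2, H0c (‖ξ‖ * ‖x‖) * Complex.exp (Complex.I * (t : ℂ) * ((‖ξ‖ : ℝ) : ℂ) ^ 2) *
      ((J0 (‖ξ‖ * ‖y‖) : ℝ) : ℂ) * (((φ (N⁻¹ • ξ) - φ ((2/N) • ξ)) : ℝ) : ℂ)


def projTail {d : ℕ} (d₁ : ℕ) (x : Ed d) : Ed d :=
  (EuclideanSpace.equiv (Fin d) ℝ).symm (fun i => if (i : ℕ) < d₁ then 0 else x i)

/-- The cutoff `φ_{|x^{d₁}| > C}` acting only in the first `d₁` variables. -/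
def cutHeadGT {d : ℕ} (d₁ : ℕ) (φ : Ed d → ℝ) (C : ℝ) (x : Ed d) : ℝ :=
  1 - φ (C⁻¹ • projHead d₁ x)

/-- The cutoff `φ_{|x^{d-d₁}| > C}` acting only in the last `d-d₁` variables. -/
def cutTailGT {d : ℕ} (d₁ : ℕ) (φ : Ed d → ℝ) (C : ℝ) (x : Ed d) : ℝ :=
  1 - φ (C⁻¹ • projTail d₁ x)

end

/-- The quadratic-and-higher remainder `F(ε)` in the expansion of `|Q+ε|^{2(d+2)/d}`. -/
noncomputable def Fquad (d : ℕ) (Q : Ed d → ℝ) (ε : Ed d → ℂ) (y : Ed d) : ℝ :=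
  ‖((Q y : ℝ) : ℂ) + ε y‖ ^ ((2*((d:ℝ)+2))/(d:ℝ)) - Q y ^ ((2*((d:ℝ)+2))/(d:ℝ)) -
    (((d:ℝ)+2)/(d:ℝ)) * Q y ^ ((4:ℝ)/(d:ℝ)) * (ε y).im ^ 2 -
    (2*((d:ℝ)+2)/(d:ℝ)) * Q y ^ (1 + (4:ℝ)/(d:ℝ)) * (ε y).re -
    ((((d:ℝ)+2)/(d:ℝ)) * (((d:ℝ)+4)/(d:ℝ))) * Q y ^ ((4:ℝ)/(d:ℝ)) * (ε y).re ^ 2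


section FquadAux
open Real

private lemma sq_rpow' {x : ℝ} (hx : 0 ≤ x) (e : ℝ) : (x ^ 2) ^ e = x ^ (2 * e) := by
  rw [← Real.rpow_natCast x 2, ← Real.rpow_mul hx]; norm_num

private noncomputable def sQ (q a b t : ℝ) : ℝ := (q + t*a)^2 + (t*b)^2
private noncomputable def lQ (q a b t : ℝ) : ℝ := 2*a*(q+t*a) + 2*b*(t*b)
private noncomputable def fQ0 (p q a b t : ℝ) : ℝ := sQ q a b t ^ (p/2)
private noncomputable def fQ1 (p q a b t : ℝ) : ℝ :=
  (p/2) * (sQ q a b t ^ (p/2 - 1) * lQ q a b t)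
private noncomputable def fQ2 (p q a b t : ℝ) : ℝ :=
  (p/2) * ((p/2-1) * (sQ q a b t ^ (p/2 - 2) * lQ q a b t ^ 2)
    + sQ q a b t ^ (p/2 - 1) * (2*(a^2+b^2)))
private noncomputable def fQ3 (p q a b t : ℝ) : ℝ :=
  (p/2)*(p/2-1)*(p/2-2) * (sQ q a b t ^ (p/2 - 3) * lQ q a b t ^ 3)
    + 6*(a^2+b^2)*(p/2)*(p/2-1) * (sQ q a b t ^ (p/2 - 2) * lQ q a b t)

private lemma hasDerivAt_sQ (q a b t : ℝ) : HasDerivAt (sQ q a b) (lQ q a b t) t := by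
  unfold sQ lQ
  have h1 : HasDerivAt (fun t : ℝ => q + t * a) a t := by
    simpa using (hasDerivAt_mul_const a).const_add q
  have h2 : HasDerivAt (fun t : ℝ => t * b) b t := hasDerivAt_mul_const b
  have := (h1.pow 2).add (h2.pow 2)
  refine this.congr_deriv ?_
  ring

private lemma hasDerivAt_lQ (q a b t : ℝ) : HasDerivAt (lQ q a b) (2*(a^2+b^2)) t := by
  unfold lQ
  have h1 : HasDerivAt (fun t : ℝ => q + t * a) a t := by
    simpa using (hasDerivAt_mul_const a).const_add q
  have h2 : HasDerivAt (fun t : ℝ => t * b) b t := hasDerivAt_mul_const b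
  have := (h1.const_mul (2*a)).add (h2.const_mul (2*b))
  refine this.congr_deriv ?_
  ring

private lemma hasDerivAt_fQ0 (p q a b t : ℝ) (h : sQ q a b t ≠ 0) :
    HasDerivAt (fQ0 p q a b) (fQ1 p q a b t) t := by
  unfold fQ0 fQ1
  have := (hasDerivAt_sQ q a b t).rpow_const (p := p/2) (Or.inl h)
  convert this using 1
  ring

private lemma hasDerivAt_fQ1 (p q a b t : ℝ) (h : sQ q a b t ≠ 0) :
    HasDerivAt (fQ1 p q a b) (fQ2 p q a b t) t := by
  unfold fQ1 fQ2
  have hr : HasDerivAt (fun t => sQ q a b t ^ (p/2 - 1))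
      (lQ q a b t * (p/2-1) * sQ q a b t ^ (p/2 - 1 - 1)) t :=
    (hasDerivAt_sQ q a b t).rpow_const (Or.inl h)
  have := (hr.mul (hasDerivAt_lQ q a b t)).const_mul (p/2)
  refine this.congr_deriv ?_
  rw [show p/2 - 1 - 1 = p/2 - 2 by ring]
  ring

private lemma hasDerivAt_fQ2 (p q a b t : ℝ) (h : sQ q a b t ≠ 0) :
    HasDerivAt (fQ2 p q a b) (fQ3 p q a b t) t := by
  unfold fQ2 fQ3
  have hr2 : HasDerivAt (fun t => sQ q a b t ^ (p/2 - 2))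
      (lQ q a b t * (p/2-2) * sQ q a b t ^ (p/2 - 2 - 1)) t :=
    (hasDerivAt_sQ q a b t).rpow_const (Or.inl h)
  have hr1 : HasDerivAt (fun t => sQ q a b t ^ (p/2 - 1))
      (lQ q a b t * (p/2-1) * sQ q a b t ^ (p/2 - 1 - 1)) t :=
    (hasDerivAt_sQ q a b t).rpow_const (Or.inl h)
  have hl2 : HasDerivAt (fun t => lQ q a b t ^ 2)
      ((2:ℕ) * lQ q a b t ^ 1 * (2*(a^2+b^2))) t := (hasDerivAt_lQ q a b t).pow 2
  have hA := ((hr2.mul hl2).const_mul (p/2-1))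
  have hB := hr1.mul_const (2*(a^2+b^2))
  have := (hA.add hB).const_mul (p/2)
  refine this.congr_deriv ?_
  rw [show p/2 - 2 - 1 = p/2 - 3 by ring, show p/2 - 1 - 1 = p/2 - 2 by ring]
  push_cast
  ring

private lemma sQ_bounds {q a b r t : ℝ} (hq : 0 < q) (hr0 : 0 ≤ r) (hr2 : a^2+b^2 = r^2)
    (hrq : r < q/2) (ht : t ∈ Set.Icc (0:ℝ) 1) :
    r^2 ≤ sQ q a b t ∧ 0 < sQ q a b t ∧ sQ q a b t ≤ 4*q^2 := by
  obtain ⟨ht0, ht1⟩ := ht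
  have ha : |a| ≤ r := by nlinarith [abs_nonneg a, sq_abs a, sq_nonneg b]
  have hb : |b| ≤ r := by nlinarith [abs_nonneg b, sq_abs b, sq_nonneg a]
  have hta : |t*a| ≤ r := by
    rw [abs_mul, abs_of_nonneg ht0]
    calc t * |a| ≤ 1 * |a| := mul_le_mul_of_nonneg_right ht1 (abs_nonneg a)
      _ ≤ r := by simpa using ha
  have htb : |t*b| ≤ r := by
    rw [abs_mul, abs_of_nonneg ht0]
    calc t * |b| ≤ 1 * |b| := mul_le_mul_of_nonneg_right ht1 (abs_nonneg b)
      _ ≤ r := by simpa using hb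
  obtain ⟨hta1, hta2⟩ := abs_le.mp hta
  obtain ⟨htb1, htb2⟩ := abs_le.mp htb
  have h1 : r < q + t*a := by linarith
  refine ⟨?_, ?_, ?_⟩
  · have := pow_le_pow_left₀ hr0 h1.le 2
    unfold sQ; nlinarith [sq_nonneg (t*b)]
  · unfold sQ
    have := pow_pos (lt_of_le_of_lt hr0 h1) 2
    nlinarith [sq_nonneg (t*b)]
  · unfold sQ
    nlinarith [hq, hrq, hr0]

set_option maxHeartbeats 1000000 in
private lemma fQ3_bound {p q a b r T : ℝ} (hp : 2 < p) (hq : 0 < q) (hr0 : 0 ≤ r)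
    (hr2 : a^2 + b^2 = r^2) (hrq : r < q/2)
    (hT : ∀ t ∈ Set.Icc (0:ℝ) 1, sQ q a b t ^ ((p-3)/2) ≤ T) :
    ∀ t ∈ Set.Icc (0:ℝ) 1, ‖fQ3 p q a b t‖ ≤ (p^3 + 3*p^2) * T * r^3 := by
  intro t ht
  unfold fQ3
  obtain ⟨hsl, hs0, hsu⟩ := sQ_bounds hq hr0 hr2 hrq ht
  have hCS : lQ q a b t ^ 2 ≤ 4*r^2* sQ q a b t := by
    unfold sQ lQ
    nlinarith [sq_nonneg (a*(t*b) - b*(q+t*a)), hr2]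
  have hsq : Real.sqrt (sQ q a b t) ^ 2 = sQ q a b t := Real.sq_sqrt hs0.le
  have hl : |lQ q a b t| ≤ 2*r*Real.sqrt (sQ q a b t) := by
    have h1 : Real.sqrt (lQ q a b t ^2) ≤ Real.sqrt (4*r^2*sQ q a b t) :=
      Real.sqrt_le_sqrt hCS
    rwa [Real.sqrt_sq_eq_abs, show 4*r^2*sQ q a b t = (2*r*Real.sqrt (sQ q a b t))^2 by
      rw [mul_pow, mul_pow, hsq]; ring, Real.sqrt_sq (by positivity)] at h1
  set s := sQ q a b t with hs
  set l := lQ q a b t with hlq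
  set X := s ^ ((p-3)/2) with hX
  have hXnn : 0 ≤ X := Real.rpow_nonneg hs0.le _
  have key1 : s ^ (p/2-3) * (s * Real.sqrt s) = X := by
    rw [Real.sqrt_eq_rpow]
    nth_rewrite 2 [← Real.rpow_one s]
    rw [← Real.rpow_add hs0, ← Real.rpow_add hs0, hX]
    congr 1; ring
  have key2 : s ^ (p/2-2) * Real.sqrt s = X := by
    rw [Real.sqrt_eq_rpow, ← Real.rpow_add hs0, hX]
    congr 1; ring
  have hs3 : (0:ℝ) ≤ s ^ (p/2-3) := Real.rpow_nonneg hs0.le _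
  have hs2 : (0:ℝ) ≤ s ^ (p/2-2) := Real.rpow_nonneg hs0.le _
  have hl3 : |l|^3 ≤ 8*r^3*(s*Real.sqrt s) := by
    calc |l|^3 ≤ (2*r*Real.sqrt s)^3 := pow_le_pow_left₀ (abs_nonneg l) hl 3
      _ = 8*r^3*(Real.sqrt s^2 * Real.sqrt s) := by ring
      _ = 8*r^3*(s*Real.sqrt s) := by rw [hsq]
  have A1 : |(p/2)*(p/2-1)*(p/2-2) * (s ^ (p/2 - 3) * l ^ 3)| ≤ p^3*(r^3*X) := by
    rw [abs_mul, abs_mul (s ^ (p/2-3)), abs_of_nonneg hs3, abs_pow]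
    have hc3 : |(p/2)*(p/2-1)*(p/2-2)| ≤ (p/2)^3 := by
      rw [abs_mul, abs_mul]
      have e1 : |p/2| = p/2 := abs_of_pos (by linarith)
      have e2 : |p/2-1| ≤ p/2 := abs_le.mpr ⟨by linarith, by linarith⟩
      have e3 : |p/2-2| ≤ p/2 := abs_le.mpr ⟨by linarith, by linarith⟩
      rw [e1]
      calc p/2 * |p/2-1| * |p/2-2| ≤ p/2 * (p/2) * (p/2) := by
            apply mul_le_mul (mul_le_mul_of_nonneg_left e2 (by linarith)) e3
              (abs_nonneg _) (by positivity)
        _ = (p/2)^3 := by ring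
    have h2 : s ^ (p/2-3) * |l|^3 ≤ 8*(r^3*X) := by
      calc s ^ (p/2-3) * |l|^3 ≤ s ^ (p/2-3) * (8*r^3*(s*Real.sqrt s)) :=
            mul_le_mul_of_nonneg_left hl3 hs3
        _ = 8*r^3*(s ^ (p/2-3) * (s*Real.sqrt s)) := by ring
        _ = 8*(r^3*X) := by rw [key1]; ring
    calc |(p/2)*(p/2-1)*(p/2-2)| * (s ^ (p/2-3) * |l|^3)
        ≤ (p/2)^3 * (8*(r^3*X)) := by
          apply mul_le_mul hc3 h2 (by positivity) (by positivity)
      _ = p^3*(r^3*X) := by ring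
  have A2 : |6*(a^2+b^2)*(p/2)*(p/2-1) * (s ^ (p/2 - 2) * l)| ≤ 3*p^2*(r^3*X) := by
    rw [abs_mul, abs_mul (s ^ (p/2-2)), abs_of_nonneg hs2]
    have hc2 : |6*(a^2+b^2)*(p/2)*(p/2-1)| ≤ 6*r^2*((p/2)*(p/2)) := by
      rw [abs_mul, abs_mul, show |6*(a^2+b^2)| = 6*r^2 by
        rw [abs_of_nonneg (by positivity)]; rw [hr2]]
      have e1 : |p/2| = p/2 := abs_of_pos (by linarith)
      have e2 : |p/2-1| ≤ p/2 := abs_le.mpr ⟨by linarith, by linarith⟩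
      rw [e1]
      linarith [mul_le_mul_of_nonneg_left e2 (show (0:ℝ) ≤ 6*r^2*(p/2) by positivity)]
    have h2 : s ^ (p/2-2) * |l| ≤ 2*r*X := by
      calc s ^ (p/2-2) * |l| ≤ s ^ (p/2-2) * (2*r*Real.sqrt s) :=
            mul_le_mul_of_nonneg_left hl hs2
        _ = 2*r*(s ^ (p/2-2) * Real.sqrt s) := by ring
        _ = 2*r*X := by rw [key2]
    calc |6*(a^2+b^2)*(p/2)*(p/2-1)| * (s ^ (p/2-2) * |l|)
        ≤ (6*r^2*((p/2)*(p/2))) * (2*r*X) := by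
          apply mul_le_mul hc2 h2 (by positivity) (by positivity)
      _ = 3*p^2*(r^3*X) := by ring
  rw [Real.norm_eq_abs]
  have habs := abs_add_le ((p/2)*(p/2-1)*(p/2-2) * (s ^ (p/2 - 3) * l ^ 3))
    (6*(a^2+b^2)*(p/2)*(p/2-1) * (s ^ (p/2 - 2) * l))
  have hfin : (p^3+3*p^2)*(r^3*X) ≤ (p^3+3*p^2)*(r^3*T) := by
    apply mul_le_mul_of_nonneg_left (mul_le_mul_of_nonneg_left (hT t ht) (by positivity))
      (by positivity)
  linarith [A1, A2, habs, hfin]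

private lemma remainder_bound {p q a b r T : ℝ} (hp : 2 < p) (hq : 0 < q) (hr0 : 0 ≤ r)
    (hr2 : a^2 + b^2 = r^2) (hrq : r < q/2)
    (hT : ∀ t ∈ Set.Icc (0:ℝ) 1, sQ q a b t ^ ((p-3)/2) ≤ T) :
    |fQ0 p q a b 1 - fQ0 p q a b 0 - fQ1 p q a b 0 - fQ2 p q a b 0 / 2|
      ≤ (p^3 + 3*p^2) * T * r^3 := by
  have h0I : (0:ℝ) ∈ Set.Icc (0:ℝ) 1 := by norm_num
  have hconv : Convex ℝ (Set.Icc (0:ℝ) 1) := convex_Icc 0 1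
  have hpos : ∀ t ∈ Set.Icc (0:ℝ) 1, sQ q a b t ≠ 0 :=
    fun t ht => (sQ_bounds hq hr0 hr2 hrq ht).2.1.ne'
  have hTnn : 0 ≤ T :=
    le_trans (Real.rpow_nonneg (sQ_bounds hq hr0 hr2 hrq h0I).2.1.le _) (hT 0 h0I)
  set K := (p^3 + 3*p^2) * T * r^3 with hKdef
  have hKnn : 0 ≤ K := by
    apply mul_nonneg (mul_nonneg (by positivity) hTnn) (by positivity)
  have hf3 := fQ3_bound hp hq hr0 hr2 hrq hT
  have step1 : ∀ t ∈ Set.Icc (0:ℝ) 1, ‖fQ2 p q a b t - fQ2 p q a b 0‖ ≤ K := by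
    intro t ht
    have h := hconv.norm_image_sub_le_of_norm_hasDerivWithin_le
      (fun x hx => (hasDerivAt_fQ2 p q a b x (hpos x hx)).hasDerivWithinAt) hf3 h0I ht
    have ht1 : ‖t - (0:ℝ)‖ ≤ 1 := by
      rw [Real.norm_eq_abs, sub_zero, abs_of_nonneg ht.1]; exact ht.2
    exact le_trans h (mul_le_of_le_one_right hKnn ht1)
  have step2 : ∀ t ∈ Set.Icc (0:ℝ) 1,
      ‖fQ1 p q a b t - fQ1 p q a b 0 - fQ2 p q a b 0 * t‖ ≤ K := by
    intro t ht
    have hder2 : ∀ x ∈ Set.Icc (0:ℝ) 1, HasDerivWithinAt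
        (fun t => fQ1 p q a b t - fQ1 p q a b 0 - fQ2 p q a b 0 * t)
        (fQ2 p q a b x - fQ2 p q a b 0) (Set.Icc (0:ℝ) 1) x := by
      intro x hx
      have h1 := ((hasDerivAt_fQ1 p q a b x (hpos x hx)).sub_const (fQ1 p q a b 0)).sub
        ((hasDerivAt_id x).const_mul (fQ2 p q a b 0))
      exact h1.hasDerivWithinAt.congr_deriv (by ring)
    have h := hconv.norm_image_sub_le_of_norm_hasDerivWithin_le hder2
      (fun x hx => step1 x hx) h0I ht
    have ht1 : ‖t - (0:ℝ)‖ ≤ 1 := by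
      rw [Real.norm_eq_abs, sub_zero, abs_of_nonneg ht.1]; exact ht.2
    have h2 := le_trans h (mul_le_of_le_one_right hKnn ht1)
    simpa using h2
  have hder3 : ∀ x ∈ Set.Icc (0:ℝ) 1, HasDerivWithinAt
      (fun t => fQ0 p q a b t - fQ0 p q a b 0 - fQ1 p q a b 0 * t - fQ2 p q a b 0 / 2 * t^2)
      (fQ1 p q a b x - fQ1 p q a b 0 - fQ2 p q a b 0 * x) (Set.Icc (0:ℝ) 1) x := by
    intro x hx
    have h1 := (((hasDerivAt_fQ0 p q a b x (hpos x hx)).sub_const (fQ0 p q a b 0)).sub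
      ((hasDerivAt_id x).const_mul (fQ1 p q a b 0))).sub
      ((hasDerivAt_pow 2 x).const_mul (fQ2 p q a b 0 / 2))
    have h2 := h1.hasDerivWithinAt (s := Set.Icc (0:ℝ) 1)
    refine h2.congr_deriv ?_
    push_cast
    ring
  have h := hconv.norm_image_sub_le_of_norm_hasDerivWithin_le hder3
    (fun x hx => step2 x hx) h0I (by norm_num : (1:ℝ) ∈ Set.Icc (0:ℝ) 1)
  rw [Real.norm_eq_abs] at h
  have h2 : |fQ0 p q a b 1 - fQ0 p q a b 0 - fQ1 p q a b 0 - fQ2 p q a b 0 / 2| ≤ K * 1 := by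
    convert h using 2
    · ring
    · simp
  simpa using h2

private lemma endpoint (p q a b : ℝ) (hq : 0 < q) :
    ((q+a)^2 + b^2) ^ (p/2) - q ^ p - (p/2)*q^(p-2)*b^2 - p*q^(p-1)*a
      - (p/2)*(p-1)*q^(p-2)*a^2
    = fQ0 p q a b 1 - fQ0 p q a b 0 - fQ1 p q a b 0 - fQ2 p q a b 0 / 2 := by
  have hs1 : sQ q a b 1 = (q+a)^2 + b^2 := by unfold sQ; ring
  have hs0 : sQ q a b 0 = q^2 := by unfold sQ; ring
  have hl0 : lQ q a b 0 = 2*a*q := by unfold lQ; ring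
  unfold fQ0 fQ1 fQ2
  rw [hs1, hs0, hl0]
  simp only [sq_rpow' hq.le]
  rw [show 2*(p/2) = p by ring, show 2*(p/2-1) = p-2 by ring, show 2*(p/2-2) = p-4 by ring]
  have hq1 : q^(p-2) * q = q^(p-1) := by
    nth_rewrite 2 [← Real.rpow_one q]
    rw [← Real.rpow_add hq]; congr 1; ring
  have hq2 : q^(p-4) * q^2 = q^(p-2) := by
    rw [← Real.rpow_natCast q 2, ← Real.rpow_add hq]; congr 1; push_cast; ring
  rw [← hq1, ← hq2]
  ring

private lemma caseB {p q a b r T : ℝ} (hp : 2 < p) (hq : 0 < q) (hr0 : 0 ≤ r)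
    (hr2 : a^2 + b^2 = r^2) (hrq : r < q/2)
    (hT : ∀ t ∈ Set.Icc (0:ℝ) 1, sQ q a b t ^ ((p-3)/2) ≤ T) :
    |((q+a)^2 + b^2) ^ (p/2) - q ^ p - (p/2)*q^(p-2)*b^2 - p*q^(p-1)*a
      - (p/2)*(p-1)*q^(p-2)*a^2| ≤ (p^3 + 3*p^2) * T * r^3 := by
  rw [endpoint p q a b hq]
  exact remainder_bound hp hq hr0 hr2 hrq hT

-- Case A : |eps| >= q/2
set_option maxHeartbeats 1000000 in
private lemma caseA {p q a b r : ℝ} (hp : 2 < p) (hq : 0 < q) (hr0 : 0 ≤ r)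
    (hr2 : a^2 + b^2 = r^2) (hqr : q ≤ 2*r) :
    |((q+a)^2 + b^2) ^ (p/2) - q ^ p - (p/2)*q^(p-2)*b^2 - p*q^(p-1)*a
      - (p/2)*(p-1)*q^(p-2)*a^2| ≤ (3^p + 2^p + 2^p*(p + p + p^2)) * r ^ p := by
  have hrpos : 0 < r := by linarith
  have ha : |a| ≤ r := by nlinarith [abs_nonneg a, sq_abs a, sq_nonneg b]
  have hb : |b| ≤ r := by nlinarith [abs_nonneg b, sq_abs b, sq_nonneg a]
  have hp0 : (0:ℝ) ≤ p := by linarith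
  have hrp : (0:ℝ) ≤ r ^ p := Real.rpow_nonneg hr0 p
  have ha2 : a^2 ≤ r^2 := by nlinarith [sq_abs a]
  have hb2 : b^2 ≤ r^2 := by nlinarith [sq_abs b]
  have haa : a ≤ r := le_trans (le_abs_self a) ha
  have haa' : -r ≤ a := by have := (abs_le.mp ha).1; linarith
  have hqa : q*a ≤ q*r := mul_le_mul_of_nonneg_left haa hq.le
  -- powers of r
  have hmul2 : r^(p-2) * r^2 = r^p := by
    rw [← Real.rpow_natCast r 2, ← Real.rpow_add hrpos]; congr 1; push_cast; ring
  have hmul1 : r^(p-1) * r = r^p := by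
    nth_rewrite 2 [← Real.rpow_one r]
    rw [← Real.rpow_add hrpos]; congr 1; ring
  -- B1
  have B1 : ((q+a)^2 + b^2) ^ (p/2) ≤ 3^p * r^p := by
    have hS : (q+a)^2 + b^2 ≤ (3*r)^2 := by nlinarith [hqa, hqr, hq, hr2]
    calc ((q+a)^2+b^2)^(p/2) ≤ ((3*r)^2)^(p/2) :=
          Real.rpow_le_rpow (by positivity) hS (by positivity)
      _ = (3*r)^p := by rw [sq_rpow' (by positivity : (0:ℝ) ≤ 3*r), show 2*(p/2)=p by ring]
      _ = 3^p * r^p := Real.mul_rpow (by norm_num) hr0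
  have B1' : (0:ℝ) ≤ ((q+a)^2 + b^2) ^ (p/2) := Real.rpow_nonneg (by positivity) _
  -- B2
  have B2 : q^p ≤ 2^p * r^p := by
    calc q^p ≤ (2*r)^p := Real.rpow_le_rpow hq.le hqr hp0
      _ = 2^p * r^p := Real.mul_rpow (by norm_num) hr0
  have B2' : (0:ℝ) ≤ q^p := Real.rpow_nonneg hq.le _
  -- powers of q
  have hqp2 : q^(p-2) ≤ 2^p * r^(p-2) := by
    calc q^(p-2) ≤ (2*r)^(p-2) := Real.rpow_le_rpow hq.le hqr (by linarith)
      _ = 2^(p-2) * r^(p-2) := Real.mul_rpow (by norm_num) hr0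
      _ ≤ 2^p * r^(p-2) := by
          apply mul_le_mul_of_nonneg_right
            (Real.rpow_le_rpow_of_exponent_le one_le_two (by linarith))
            (Real.rpow_nonneg hr0 _)
  have hqp1 : q^(p-1) ≤ 2^p * r^(p-1) := by
    calc q^(p-1) ≤ (2*r)^(p-1) := Real.rpow_le_rpow hq.le hqr (by linarith)
      _ = 2^(p-1) * r^(p-1) := Real.mul_rpow (by norm_num) hr0
      _ ≤ 2^p * r^(p-1) := by
          apply mul_le_mul_of_nonneg_right
            (Real.rpow_le_rpow_of_exponent_le one_le_two (by linarith))
            (Real.rpow_nonneg hr0 _)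
  have hq2' : (0:ℝ) ≤ q^(p-2) := Real.rpow_nonneg hq.le _
  have hq1' : (0:ℝ) ≤ q^(p-1) := Real.rpow_nonneg hq.le _
  -- B3
  have hB3a : q^(p-2) * b^2 ≤ 2^p * r^p := by
    calc q^(p-2) * b^2 ≤ (2^p * r^(p-2)) * r^2 :=
          mul_le_mul hqp2 hb2 (sq_nonneg b) (by positivity)
      _ = 2^p * (r^(p-2) * r^2) := by ring
      _ = 2^p * r^p := by rw [hmul2]
  have B3 : (p/2)*q^(p-2)*b^2 ≤ p*(2^p*r^p) := by
    have h1 := mul_le_mul_of_nonneg_left hB3a (show (0:ℝ) ≤ p/2 by linarith)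
    have h2 := mul_le_mul_of_nonneg_right (show p/2 ≤ p by linarith)
      (show (0:ℝ) ≤ 2^p*r^p by positivity)
    linarith
  have B3' : (0:ℝ) ≤ (p/2)*q^(p-2)*b^2 := by positivity
  -- B5
  have hB5a : q^(p-2) * a^2 ≤ 2^p * r^p := by
    calc q^(p-2) * a^2 ≤ (2^p * r^(p-2)) * r^2 :=
          mul_le_mul hqp2 ha2 (sq_nonneg a) (by positivity)
      _ = 2^p * (r^(p-2) * r^2) := by ring
      _ = 2^p * r^p := by rw [hmul2]
  have B5 : (p/2)*(p-1)*q^(p-2)*a^2 ≤ p^2*(2^p*r^p) := by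
    have h1 := mul_le_mul_of_nonneg_left hB5a (show (0:ℝ) ≤ (p/2)*(p-1) by nlinarith)
    have h2 := mul_le_mul_of_nonneg_right (show (p/2)*(p-1) ≤ p^2 by nlinarith)
      (show (0:ℝ) ≤ 2^p*r^p by positivity)
    linarith
  have B5' : (0:ℝ) ≤ (p/2)*(p-1)*q^(p-2)*a^2 := by
    apply mul_nonneg (mul_nonneg (by nlinarith) hq2') (sq_nonneg a)
  -- B4
  have B4 : |p*q^(p-1)*a| ≤ p*(2^p*r^p) := by
    rw [abs_mul, abs_of_nonneg (by positivity : (0:ℝ) ≤ p*q^(p-1))]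
    calc p*q^(p-1) * |a| ≤ p*(2^p * r^(p-1)) * r := by
          apply mul_le_mul (mul_le_mul_of_nonneg_left hqp1 hp0) ha (abs_nonneg a)
            (by positivity)
      _ = p*(2^p*(r^(p-1)*r)) := by ring
      _ = p*(2^p*r^p) := by rw [hmul1]
  obtain ⟨B4l, B4r⟩ := abs_le.mp B4
  apply abs_le.mpr
  constructor
  · linarith [B1, B1', B2, B2', B3, B3', B4l, B4r, B5, B5']
  · linarith [B1, B1', B2, B2', B3, B3', B4l, B4r, B5, B5']


set_option maxHeartbeats 1000000 in
private lemma Fquad_pointwise (d : ℕ) (hd : 1 ≤ d) (Q : Ed d → ℝ) (hQ : IsGroundState d Q) :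
    ∃ B : ℝ, 0 < B ∧ ∀ (ε : Ed d → ℂ) (y : Ed d),
      (4 ≤ d → |Fquad d Q ε y| ≤ B * ‖ε y‖ ^ ((2*((d:ℝ)+2))/(d:ℝ))) ∧
      (d ≤ 3 → |Fquad d Q ε y| ≤ B * (‖ε y‖ ^ ((2*((d:ℝ)+2))/(d:ℝ)) + ‖ε y‖ ^ (3:ℝ))) := by
  have hd0 : (0:ℝ) < d := by exact_mod_cast hd
  have hdne : (d:ℝ) ≠ 0 := hd0.ne'
  obtain ⟨S, hS⟩ := hQ.schwartz
  obtain ⟨M₀, hM₀pos, hM₀⟩ := S.decay 0 0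
  set M : ℝ := max M₀ 1 with hM
  have hM1 : (1:ℝ) ≤ M := le_max_right _ _
  have hQM : ∀ y, Q y ≤ M := by
    intro y
    have h := hM₀ y
    simp only [pow_zero, one_mul, norm_iteratedFDeriv_zero] at h
    rw [hS y]
    calc S y ≤ ‖S y‖ := le_abs_self _
      _ ≤ M₀ := h
      _ ≤ M := le_max_left _ _
  set p := (2*((d:ℝ)+2))/(d:ℝ) with hpdef
  have hp : 2 < p := by rw [hpdef, lt_div_iff₀ hd0]; linarith
  have hp0 : (0:ℝ) < p := by linarith
  set CA := (3:ℝ)^p + 2^p + 2^p*(p + p + p^2) with hCAdef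
  have hCApos : 0 < CA := by rw [hCAdef]; positivity
  have h2M : (0:ℝ) < 2*M := by linarith
  set CB := (p^3 + 3*p^2) * (1 + (2*M)^(p-3)) with hCBdef
  have hCBpos : 0 < CB := by rw [hCBdef]; positivity
  have h2Mnn : (0:ℝ) ≤ (2*M)^(p-3) := Real.rpow_nonneg h2M.le _
  refine ⟨CA + CB, by positivity, ?_⟩
  intro ε y
  have hq : 0 < Q y := hQ.pos y
  have hr0 : (0:ℝ) ≤ ‖ε y‖ := norm_nonneg _
  have hr2 : (ε y).re^2 + (ε y).im^2 = ‖ε y‖^2 := by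
    rw [Complex.sq_norm, Complex.normSq_apply]; ring
  have hrpnn : (0:ℝ) ≤ ‖ε y‖ ^ p := Real.rpow_nonneg hr0 _
  have hr3nn : (0:ℝ) ≤ ‖ε y‖ ^ (3:ℝ) := Real.rpow_nonneg hr0 _
  -- rewrite Fquad into normal form
  have he2 : (4:ℝ)/(d:ℝ) = p - 2 := by rw [hpdef]; field_simp; ring
  have heh : ((d:ℝ)+2)/(d:ℝ) = p/2 := by rw [hpdef]; ring
  have he4 : ((d:ℝ)+4)/(d:ℝ) = p - 1 := by rw [hpdef]; field_simp; ring
  have hnorm : ‖((Q y:ℝ):ℂ) + ε y‖ ^ p = ((Q y + (ε y).re)^2 + (ε y).im^2) ^ (p/2) := by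
    have hz : ‖((Q y:ℝ):ℂ) + ε y‖^2 = (Q y + (ε y).re)^2 + (ε y).im^2 := by
      rw [Complex.sq_norm, Complex.normSq_apply, Complex.add_re,
        Complex.add_im, Complex.ofReal_re, Complex.ofReal_im]
      ring
    rw [← hz, sq_rpow' (norm_nonneg _), show 2*(p/2) = p by ring]
  have hFq : Fquad d Q ε y = ((Q y + (ε y).re)^2 + (ε y).im^2) ^ (p/2) - (Q y) ^ p
      - (p/2)*(Q y)^(p-2)*(ε y).im^2 - p*(Q y)^(p-1)*(ε y).re
      - (p/2)*(p-1)*(Q y)^(p-2)*(ε y).re^2 := by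
    unfold Fquad
    rw [← hpdef, he2, heh, he4, show (1:ℝ) + (p-2) = p - 1 by ring, hnorm]
  by_cases hr : ‖ε y‖ < Q y / 2
  · -- Taylor regime
    constructor
    · intro h4
      have hd4 : (4:ℝ) ≤ d := by exact_mod_cast h4
      have hp3 : p ≤ 3 := by rw [hpdef, div_le_iff₀ hd0]; linarith
      by_cases hrz : ‖ε y‖ = 0
      · have hz : ε y = 0 := norm_eq_zero.mp hrz
        have hF0 : Fquad d Q ε y = 0 := by
          rw [hFq, hz]
          simp only [Complex.zero_re, Complex.zero_im]
          rw [show (Q y + 0)^2 + (0:ℝ)^2 = Q y ^2 by ring, sq_rpow' hq.le,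
            show 2*(p/2) = p by ring]
          ring
        rw [hF0, abs_zero]
        positivity
      · have hrpos : 0 < ‖ε y‖ := lt_of_le_of_ne hr0 (Ne.symm hrz)
        have hT : ∀ t ∈ Set.Icc (0:ℝ) 1,
            sQ (Q y) (ε y).re (ε y).im t ^ ((p-3)/2) ≤ ‖ε y‖^(p-3) := by
          intro t ht
          obtain ⟨hsl, hs0, -⟩ := sQ_bounds hq hr0 hr2 hr ht
          have h1 : sQ (Q y) (ε y).re (ε y).im t ^ ((p-3)/2) ≤ (‖ε y‖^2) ^ ((p-3)/2) :=
            Real.rpow_le_rpow_of_nonpos (by positivity) hsl (by linarith)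
          rwa [sq_rpow' hr0, show 2*((p-3)/2) = p-3 by ring] at h1
        have hcb := caseB hp hq hr0 hr2 hr hT
        have hmul : ‖ε y‖^(p-3) * ‖ε y‖^(3:ℕ) = ‖ε y‖^p := by
          rw [← Real.rpow_natCast (‖ε y‖) 3, ← Real.rpow_add hrpos]
          congr 1; push_cast; ring
        rw [hFq]
        calc _ ≤ (p^3 + 3*p^2) * ‖ε y‖^(p-3) * ‖ε y‖^3 := hcb
          _ = (p^3+3*p^2) * (‖ε y‖^(p-3) * ‖ε y‖^(3:ℕ)) := by ring
          _ = (p^3+3*p^2) * ‖ε y‖^p := by rw [hmul]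
          _ ≤ (CA + CB) * ‖ε y‖^p := by
              apply mul_le_mul_of_nonneg_right ?_ hrpnn
              rw [hCBdef]
              nlinarith [h2Mnn, hCApos, hp0]
    · intro h3
      have hd3 : (d:ℝ) ≤ 3 := by exact_mod_cast h3
      have hp3 : 3 ≤ p := by rw [hpdef, le_div_iff₀ hd0]; linarith
      have hT : ∀ t ∈ Set.Icc (0:ℝ) 1,
          sQ (Q y) (ε y).re (ε y).im t ^ ((p-3)/2) ≤ (2*M)^(p-3) := by
        intro t ht
        obtain ⟨-, hs0, hsu⟩ := sQ_bounds hq hr0 hr2 hr ht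
        have hq4 : 4*(Q y)^2 ≤ (2*M)^2 := by nlinarith [hQM y, hq]
        have h1 : sQ (Q y) (ε y).re (ε y).im t ^ ((p-3)/2) ≤ ((2*M)^2) ^ ((p-3)/2) :=
          Real.rpow_le_rpow hs0.le (le_trans hsu hq4) (by linarith)
        rwa [sq_rpow' h2M.le, show 2*((p-3)/2) = p-3 by ring] at h1
      have hcb := caseB hp hq hr0 hr2 hr hT
      have h3nat : ‖ε y‖ ^ (3:ℝ) = ‖ε y‖^(3:ℕ) := by
        rw [show (3:ℝ) = ((3:ℕ):ℝ) by norm_num, Real.rpow_natCast]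
      rw [hFq]
      calc _ ≤ (p^3 + 3*p^2) * (2*M)^(p-3) * ‖ε y‖^3 := hcb
        _ ≤ (CA + CB) * (‖ε y‖^p + ‖ε y‖^(3:ℝ)) := by
            rw [h3nat, hCBdef]
            linarith [mul_nonneg hCApos.le hrpnn, mul_nonneg hCApos.le (pow_nonneg hr0 3),
              mul_nonneg (by positivity : (0:ℝ) ≤ p^3+3*p^2) hrpnn,
              mul_nonneg (mul_nonneg (by positivity : (0:ℝ) ≤ p^3+3*p^2) h2Mnn) hrpnn,
              mul_nonneg (by positivity : (0:ℝ) ≤ p^3+3*p^2) (pow_nonneg hr0 3)]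
  · -- large-perturbation regime
    push_neg at hr
    have hq2r : Q y ≤ 2*‖ε y‖ := by linarith
    have hca := caseA hp hq hr0 hr2 hq2r
    constructor
    · intro _
      rw [hFq]
      calc _ ≤ ((3:ℝ)^p + 2^p + 2^p*(p + p + p^2)) * ‖ε y‖^p := hca
        _ = CA * ‖ε y‖^p := by rw [hCAdef]
        _ ≤ (CA + CB) * ‖ε y‖^p := by linarith [mul_nonneg hCBpos.le hrpnn]
    · intro _
      rw [hFq]
      calc _ ≤ ((3:ℝ)^p + 2^p + 2^p*(p + p + p^2)) * ‖ε y‖^p := hca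
        _ = CA * ‖ε y‖^p := by rw [hCAdef]
        _ ≤ (CA + CB) * (‖ε y‖^p + ‖ε y‖^(3:ℝ)) := by
            linarith [mul_nonneg hCBpos.le hrpnn, mul_nonneg hCApos.le hr3nn,
              mul_nonneg hCBpos.le hr3nn]

end FquadAux

/-- bound on `∫|F(ε)|`. -/
theorem Fquad_bound (d : ℕ) (hd : 1 ≤ d) (Q : Ed d → ℝ) (hQ : IsGroundState d Q) :
    ∃ B₁ : ℝ, 0 < B₁ ∧
      ∀ ε : Ed d → ℂ, Measurable ε →
        (∫⁻ x, (‖ε x‖₊ : ℝ≥0∞) ^ ((2*((d:ℝ)+2))/(d:ℝ))) < ⊤ →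
        (d ≤ 3 → (∫⁻ x, (‖ε x‖₊ : ℝ≥0∞) ^ (3:ℝ)) < ⊤) →
        (4 ≤ d →
          (∫⁻ y, ENNReal.ofReal |Fquad d Q ε y|) ≤
            ENNReal.ofReal B₁ * ∫⁻ x, (‖ε x‖₊ : ℝ≥0∞) ^ ((2*((d:ℝ)+2))/(d:ℝ))) ∧
        (d ≤ 3 →
          (∫⁻ y, ENNReal.ofReal |Fquad d Q ε y|) ≤
            ENNReal.ofReal B₁ *
              ((∫⁻ x, (‖ε x‖₊ : ℝ≥0∞) ^ ((2*((d:ℝ)+2))/(d:ℝ))) +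
                ∫⁻ x, (‖ε x‖₊ : ℝ≥0∞) ^ (3:ℝ))) := by
  obtain ⟨B, hB, hpt⟩ := Fquad_pointwise d hd Q hQ
  have hd0 : (0:ℝ) < d := by exact_mod_cast hd
  have hp0 : (0:ℝ) ≤ (2*((d:ℝ)+2))/(d:ℝ) := by positivity
  refine ⟨B, hB, ?_⟩
  intro ε hε _ _
  constructor
  · intro h4
    calc (∫⁻ y, ENNReal.ofReal |Fquad d Q ε y|)
        ≤ ∫⁻ y, ENNReal.ofReal B * (‖ε y‖₊ : ℝ≥0∞) ^ ((2*((d:ℝ)+2))/(d:ℝ)) := by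
          apply lintegral_mono
          intro y
          calc ENNReal.ofReal |Fquad d Q ε y|
              ≤ ENNReal.ofReal (B * ‖ε y‖ ^ ((2*((d:ℝ)+2))/(d:ℝ))) :=
                ENNReal.ofReal_le_ofReal ((hpt ε y).1 h4)
            _ = ENNReal.ofReal B * ENNReal.ofReal (‖ε y‖ ^ ((2*((d:ℝ)+2))/(d:ℝ))) :=
                ENNReal.ofReal_mul hB.le
            _ = ENNReal.ofReal B * (‖ε y‖₊ : ℝ≥0∞) ^ ((2*((d:ℝ)+2))/(d:ℝ)) := by
                rw [← ENNReal.ofReal_rpow_of_nonneg (norm_nonneg _) hp0,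
                  ofReal_norm, enorm_eq_nnnorm]
      _ = ENNReal.ofReal B * ∫⁻ x, (‖ε x‖₊ : ℝ≥0∞) ^ ((2*((d:ℝ)+2))/(d:ℝ)) :=
          lintegral_const_mul' _ _ ENNReal.ofReal_ne_top
  · intro h3
    calc (∫⁻ y, ENNReal.ofReal |Fquad d Q ε y|)
        ≤ ∫⁻ y, ENNReal.ofReal B * ((‖ε y‖₊ : ℝ≥0∞) ^ ((2*((d:ℝ)+2))/(d:ℝ))
            + (‖ε y‖₊ : ℝ≥0∞) ^ (3:ℝ)) := by
          apply lintegral_mono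
          intro y
          calc ENNReal.ofReal |Fquad d Q ε y|
              ≤ ENNReal.ofReal (B * (‖ε y‖ ^ ((2*((d:ℝ)+2))/(d:ℝ)) + ‖ε y‖ ^ (3:ℝ))) :=
                ENNReal.ofReal_le_ofReal ((hpt ε y).2 h3)
            _ = ENNReal.ofReal B * ENNReal.ofReal (‖ε y‖ ^ ((2*((d:ℝ)+2))/(d:ℝ))
                  + ‖ε y‖ ^ (3:ℝ)) := ENNReal.ofReal_mul hB.le
            _ = ENNReal.ofReal B * ((‖ε y‖₊ : ℝ≥0∞) ^ ((2*((d:ℝ)+2))/(d:ℝ))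
                  + (‖ε y‖₊ : ℝ≥0∞) ^ (3:ℝ)) := by
                rw [ENNReal.ofReal_add (Real.rpow_nonneg (norm_nonneg _) _)
                    (Real.rpow_nonneg (norm_nonneg _) _),
                  ← ENNReal.ofReal_rpow_of_nonneg (norm_nonneg _) hp0,
                  ← ENNReal.ofReal_rpow_of_nonneg (norm_nonneg _) (by norm_num : (0:ℝ) ≤ 3),
                  ofReal_norm, enorm_eq_nnnorm]
      _ = ENNReal.ofReal B * ∫⁻ y, ((‖ε y‖₊ : ℝ≥0∞) ^ ((2*((d:ℝ)+2))/(d:ℝ))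
            + (‖ε y‖₊ : ℝ≥0∞) ^ (3:ℝ)) := lintegral_const_mul' _ _ ENNReal.ofReal_ne_top
      _ = ENNReal.ofReal B *
            ((∫⁻ x, (‖ε x‖₊ : ℝ≥0∞) ^ ((2*((d:ℝ)+2))/(d:ℝ))) +
              ∫⁻ x, (‖ε x‖₊ : ℝ≥0∞) ^ (3:ℝ)) := by
          congr 1
          apply lintegral_add_left
          fun_prop
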